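/- For every integer N ≥ 13 there exists a real polynomial g ∈ ℝ[x₁,x₂,x₃] with non-negative coefficients such that g(x₁,x₂,x₃) = 1 whenever x₁ + x₂ + x₃ = 1, every triple (a,b,c) ∈ ℕ³ in the support of g satisfies 3 ∣ a + b + 2c, and the support of g has exactly N elements. -/

import Mathlib

/-!
Write `F = f₃,₂(x₁ + x₂, x₃)`; it has non-negative coefficients, equals `1` on the plane
`x₁ + x₂ + x₃ = 1`, and its monomials satisfy `3 ∣ a + b + 2c`. Hence replacing part `s` of
a coefficient `c` of an admissible `g` at a monomial `x^m`, i.e. `s x^m` by `s x^m F`, keeps `g`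
admissible. If `x^m` has maximal total degree in `g`, all monomials of `x^m F` are new, so the
rank grows by `6` when `s = c` (the monomial `x^m` disappears) and by `7` when `0 < s < c`.
Starting from `g = 1` this gives ranks `13, 14, 15`; together with explicit examples of rank
`16, 17, 18`, steps of `6` reach every `N ≥ 13`.
-/

open MvPolynomial Finset

section Graft

variable {σ R : Type*} [CommRing R]

theorem coeff_monomial_nonneg [PartialOrder R]
    (α m : σ →₀ ℕ) {r : R} (hr : 0 ≤ r) : 0 ≤ coeff α (monomial m r) := by
  classical
  rw [coeff_monomial]
  split_ifs
  exacts [hr, le_rfl]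

theorem support_add_of_nonneg [PartialOrder R] [IsOrderedRing R] [DecidableEq σ]
    {p q : MvPolynomial σ R} (hp : ∀ α, 0 ≤ coeff α p)
    (hq : ∀ α, 0 ≤ coeff α q) : (p + q).support = p.support ∪ q.support := by
  ext α
  simp only [mem_support_iff, coeff_add, Finset.mem_union, Ne,
    add_eq_zero_iff_of_nonneg (hp α) (hq α), not_and_or]

theorem support_add_of_disjoint [DecidableEq σ] {p q : MvPolynomial σ R}
    (h : Disjoint p.support q.support) : (p + q).support = p.support ∪ q.support :=
  Finsupp.support_add_eq h

theorem support_monomial_mul [NoZeroDivisors R] (m : σ →₀ ℕ) {s : R} (hs : s ≠ 0)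
    (f : MvPolynomial σ R) :
    (monomial m s * f).support = f.support.map (addLeftEmbedding m) :=
  AddMonoidAlgebra.support_coeff_single_mul f s (fun _ => by simp [hs]) m

theorem support_sub_monomial_coeff [DecidableEq σ] (g : MvPolynomial σ R) (m : σ →₀ ℕ) :
    (g - monomial m (coeff m g)).support = g.support.erase m := by
  ext α
  by_cases h : α = m
  · simp [h]
  · simp [coeff_monomial, h, Ne.symm h]

theorem support_sub_monomial_of_ne {g : MvPolynomial σ R} {m : σ →₀ ℕ} (hm : m ∈ g.support)
    {s : R} (hs : s ≠ coeff m g) : (g - monomial m s).support = g.support := by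
  classical
  ext α
  by_cases h : α = m
  · subst h
    simpa [sub_eq_zero, Ne.symm hs] using hm
  · simp [coeff_monomial, Ne.symm h]

noncomputable def graft (g : MvPolynomial σ R) (m : σ →₀ ℕ) (s : R) (f : MvPolynomial σ R) :
    MvPolynomial σ R :=
  g - monomial m s + monomial m s * f

theorem eval_graft (x : σ → R) {f : MvPolynomial σ R} (hf : eval x f = 1)
    (g : MvPolynomial σ R) (m : σ →₀ ℕ) (s : R) : eval x (graft g m s f) = eval x g := by
  simp [graft, hf]

theorem disjoint_support_monomial_mul [NoZeroDivisors R] {p : MvPolynomial σ R} {m : σ →₀ ℕ}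
    (hmax : ∀ α ∈ p.support, α.degree ≤ m.degree) {f : MvPolynomial σ R} (hf : 0 ∉ f.support)
    (s : R) : Disjoint p.support (monomial m s * f).support := by
  rcases eq_or_ne s 0 with rfl | hs
  · simp
  rw [support_monomial_mul m hs, Finset.disjoint_left]
  intro α hα hα'
  obtain ⟨β, hβ, rfl⟩ := Finset.mem_map.1 hα'
  have hβ0 : β.degree ≠ 0 := fun h0 => hf ((Finsupp.degree_eq_zero_iff β).1 h0 ▸ hβ)
  have := hmax _ hα
  simp only [addLeftEmbedding_apply, map_add] at this
  omega

theorem card_support_graft [NoZeroDivisors R] {g : MvPolynomial σ R} {m : σ →₀ ℕ}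
    (hmax : ∀ α ∈ g.support, α.degree ≤ m.degree) {f : MvPolynomial σ R} (hf : 0 ∉ f.support)
    {s : R} (hs : s ≠ 0) :
    #(graft g m s f).support = #(g - monomial m s).support + #f.support := by
  classical
  have hmax' : ∀ α ∈ (g - monomial m s).support, α.degree ≤ m.degree := by
    intro α hα
    rcases Finset.mem_union.1 (support_sub σ g _ hα) with hα | hα
    · exact hmax α hα
    · rw [Finset.mem_singleton.1 (support_monomial_subset hα)]
  have hdisj := disjoint_support_monomial_mul hmax' hf s
  rw [graft, support_add_of_disjoint hdisj, card_union_of_disjoint hdisj,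
    support_monomial_mul m hs, card_map]

theorem card_support_graft_coeff [NoZeroDivisors R] {g : MvPolynomial σ R} {m : σ →₀ ℕ}
    (hm : m ∈ g.support) (hmax : ∀ α ∈ g.support, α.degree ≤ m.degree)
    {f : MvPolynomial σ R} (hf : 0 ∉ f.support) :
    #(graft g m (coeff m g) f).support + 1 = #g.support + #f.support := by
  classical
  rw [card_support_graft hmax hf (mem_support_iff.1 hm), support_sub_monomial_coeff,
    add_right_comm, card_erase_add_one hm]

theorem card_support_graft_of_ne [NoZeroDivisors R] {g : MvPolynomial σ R} {m : σ →₀ ℕ}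
    (hm : m ∈ g.support) (hmax : ∀ α ∈ g.support, α.degree ≤ m.degree)
    {f : MvPolynomial σ R} (hf : 0 ∉ f.support) {s : R} (hs0 : s ≠ 0) (hs : s ≠ coeff m g) :
    #(graft g m s f).support = #g.support + #f.support := by
  rw [card_support_graft hmax hf hs0, support_sub_monomial_of_ne hm hs]

theorem coeff_graft_nonneg [PartialOrder R] [IsOrderedRing R] {g f : MvPolynomial σ R}
    (hg : ∀ α, 0 ≤ coeff α g) (hf : ∀ α, 0 ≤ coeff α f) {m : σ →₀ ℕ} {s : R} (hs0 : 0 ≤ s)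
    (hs : s ≤ coeff m g) (α : σ →₀ ℕ) : 0 ≤ coeff α (graft g m s f) := by
  classical
  rw [graft, coeff_add, coeff_sub, coeff_monomial, coeff_monomial_mul']
  refine add_nonneg ?_ ?_
  · split_ifs with h
    · exact sub_nonneg.2 (h ▸ hs)
    · simpa using hg α
  · split_ifs
    exacts [mul_nonneg hs0 (hf _), le_rfl]

theorem support_graft_subset (S : AddSubmonoid (σ →₀ ℕ)) {g f : MvPolynomial σ R}
    (hg : ∀ α ∈ g.support, α ∈ S) (hf : ∀ β ∈ f.support, β ∈ S) {m : σ →₀ ℕ} (hm : m ∈ S)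
    (s : R) : ∀ α ∈ (graft g m s f).support, α ∈ S := by
  classical
  have hmono : ∀ α ∈ (monomial m s).support, α ∈ S := fun α hα => by
    rwa [Finset.mem_singleton.1 (support_monomial_subset hα)]
  intro α hα
  rcases Finset.mem_union.1 (support_add hα) with hα | hα
  · rcases Finset.mem_union.1 (support_sub σ g _ hα) with hα | hα
    exacts [hg α hα, hmono α hα]
  · obtain ⟨a, ha, b, hb, rfl⟩ := Finset.mem_add.1 (support_mul _ _ hα)
    exact S.add_mem (hmono a ha) (hf b hb)

end Graft

section Terms

/- Explicit polynomials are given by lists of exponent triples with coefficients, so that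
their supports and the condition `3 ∣ a + b + 2c` can be checked by `decide`. -/

noncomputable def tri (t : ℕ × ℕ × ℕ) : Fin 3 →₀ ℕ :=
  Finsupp.equivFunOnFinite.symm ![t.1, t.2.1, t.2.2]

theorem tri_injective : Function.Injective tri := by
  rintro ⟨a, b, c⟩ ⟨a', b', c'⟩ h
  have h0 := DFunLike.congr_fun h 0
  have h1 := DFunLike.congr_fun h 1
  have h2 := DFunLike.congr_fun h 2
  simp_all [tri]

theorem tri_zero : tri (0, 0, 0) = 0 := by
  ext i
  fin_cases i <;> rfl

noncomputable def ofTerms (L : List ((ℕ × ℕ × ℕ) × ℝ)) : MvPolynomial (Fin 3) ℝ :=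
  (L.map fun q => monomial (tri q.1) q.2).sum

theorem ofTerms_cons (q : (ℕ × ℕ × ℕ) × ℝ) (L : List ((ℕ × ℕ × ℕ) × ℝ)) :
    ofTerms (q :: L) = monomial (tri q.1) q.2 + ofTerms L := by
  simp [ofTerms]

variable {L : List ((ℕ × ℕ × ℕ) × ℝ)}

theorem coeff_ofTerms_nonneg (h : ∀ q ∈ L, 0 ≤ q.2) (α : Fin 3 →₀ ℕ) :
    0 ≤ coeff α (ofTerms L) := by
  induction L with
  | nil => simp [ofTerms]
  | cons q L ih =>
    rw [ofTerms_cons, coeff_add]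
    exact add_nonneg (coeff_monomial_nonneg _ _ (h q List.mem_cons_self))
      (ih fun p hp => h p (List.mem_cons_of_mem q hp))

theorem support_ofTerms (h : ∀ q ∈ L, 0 < q.2) :
    (ofTerms L).support = (L.map Prod.fst).toFinset.map ⟨tri, tri_injective⟩ := by
  classical
  induction L with
  | nil => simp [ofTerms]
  | cons q L ih =>
    have hL : ∀ p ∈ L, 0 < p.2 := fun p hp => h p (List.mem_cons_of_mem q hp)
    have hq : 0 < q.2 := h q List.mem_cons_self
    rw [ofTerms_cons, support_add_of_nonneg (fun α => coeff_monomial_nonneg α _ hq.le)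
      (coeff_ofTerms_nonneg fun p hp => (hL p hp).le), ih hL, support_monomial, if_neg hq.ne']
    ext α
    simp [eq_comm]

theorem card_support_ofTerms (h : ∀ q ∈ L, 0 < q.2) :
    #(ofTerms L).support = #(L.map Prod.fst).toFinset := by
  rw [support_ofTerms h, card_map]

theorem eval_ofTerms (x : Fin 3 → ℝ) (L : List ((ℕ × ℕ × ℕ) × ℝ)) :
    eval x (ofTerms L) =
      (L.map fun q => q.2 * x 0 ^ q.1.1 * x 1 ^ q.1.2.1 * x 2 ^ q.1.2.2).sum := by
  induction L with
  | nil => simp [ofTerms]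
  | cons q L ih =>
    rw [ofTerms_cons, map_add, ih, eval_monomial, Finsupp.prod_fintype _ _ (by simp)]
    simp [tri, Fin.prod_univ_three, mul_assoc]

end Terms

def invariantExponents : AddSubmonoid (Fin 3 →₀ ℕ) where
  carrier := {α | 3 ∣ α 0 + α 1 + 2 * α 2}
  add_mem' {α β} hα hβ := by
    change 3 ∣ _ at hα hβ ⊢
    simp only [Finsupp.coe_add, Pi.add_apply]
    omega
  zero_mem' := by simp

structure IsAdmissible (g : MvPolynomial (Fin 3) ℝ) : Prop where
  coeff_nonneg : ∀ α, 0 ≤ g.coeff α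
  eval_eq_one : ∀ x₁ x₂ x₃ : ℝ, x₁ + x₂ + x₃ = 1 → eval ![x₁, x₂, x₃] g = 1
  three_dvd : ∀ α ∈ g.support, 3 ∣ α 0 + α 1 + 2 * α 2

namespace IsAdmissible

variable {g f : MvPolynomial (Fin 3) ℝ}

theorem support_nonempty (hg : IsAdmissible g) : g.support.Nonempty := by
  rw [Finset.nonempty_iff_ne_empty, Ne, support_eq_empty]
  rintro rfl
  simpa using hg.eval_eq_one 1 0 0 (by norm_num)

theorem graft (hg : IsAdmissible g) (hf : IsAdmissible f) {m : Fin 3 →₀ ℕ}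
    (hm : m ∈ g.support) {s : ℝ} (hs0 : 0 ≤ s) (hs : s ≤ coeff m g) :
    IsAdmissible (graft g m s f) where
  coeff_nonneg := coeff_graft_nonneg hg.coeff_nonneg hf.coeff_nonneg hs0 hs
  eval_eq_one x₁ x₂ x₃ h := by
    rw [eval_graft _ (hf.eval_eq_one x₁ x₂ x₃ h), hg.eval_eq_one x₁ x₂ x₃ h]
  three_dvd := support_graft_subset invariantExponents hg.three_dvd hf.three_dvd
    (hg.three_dvd m hm) s

end IsAdmissible

theorem isAdmissible_ofTerms {L : List ((ℕ × ℕ × ℕ) × ℝ)} (hpos : ∀ q ∈ L, 0 < q.2)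
    (hdvd : ∀ t ∈ L.map Prod.fst, 3 ∣ t.1 + t.2.1 + 2 * t.2.2)
    (heval : ∀ x₁ x₂ : ℝ,
      (L.map fun q => q.2 * x₁ ^ q.1.1 * x₂ ^ q.1.2.1 * (1 - x₁ - x₂) ^ q.1.2.2).sum = 1) :
    IsAdmissible (ofTerms L) where
  coeff_nonneg := coeff_ofTerms_nonneg fun q hq => (hpos q hq).le
  eval_eq_one x₁ x₂ x₃ h := by
    obtain rfl : x₃ = 1 - x₁ - x₂ := by linarith
    simpa [eval_ofTerms] using heval x₁ x₂
  three_dvd α hα := by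
    rw [support_ofTerms hpos] at hα
    obtain ⟨t, ht, rfl⟩ := Finset.mem_map.1 hα
    simpa [tri] using hdvd t (List.mem_toFinset.1 ht)

/-- The expansion of `f₃,₂(x₁ + x₂, x₃) = (x₁ + x₂)³ + 3 (x₁ + x₂) x₃ + x₃³`. -/
def f32Terms : List ((ℕ × ℕ × ℕ) × ℝ) :=
  [((3, 0, 0), 1), ((2, 1, 0), 3), ((1, 2, 0), 3), ((0, 3, 0), 1), ((1, 0, 1), 3),
    ((0, 1, 1), 3), ((0, 0, 3), 1)]

theorem f32Terms_pos : ∀ q ∈ f32Terms, 0 < q.2 := by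
  simp [f32Terms]

theorem isAdmissible_f32 : IsAdmissible (ofTerms f32Terms) :=
  isAdmissible_ofTerms f32Terms_pos (by decide) fun x₁ x₂ => by simp [f32Terms]; ring

theorem zero_notMem_support_f32 : 0 ∉ (ofTerms f32Terms).support := by
  rw [support_ofTerms f32Terms_pos, Finset.mem_map, ← tri_zero]
  rintro ⟨t, ht, h0⟩
  exact absurd (tri_injective h0 ▸ ht) (by decide)

theorem card_support_f32 : #(ofTerms f32Terms).support = 7 := by
  rw [card_support_ofTerms f32Terms_pos]
  decide

theorem IsAdmissible.exists_max_degree {g : MvPolynomial (Fin 3) ℝ} (hg : IsAdmissible g) :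
    ∃ m ∈ g.support, 0 < coeff m g ∧ ∀ α ∈ g.support, α.degree ≤ m.degree := by
  obtain ⟨m, hm, hmax⟩ := exists_max_image g.support Finsupp.degree hg.support_nonempty
  exact ⟨m, hm, (hg.coeff_nonneg m).lt_of_ne' (mem_support_iff.1 hm), hmax⟩

def IsAdmissibleRank (N : ℕ) : Prop := ∃ g, IsAdmissible g ∧ #g.support = N

namespace IsAdmissibleRank

theorem of_terms {L : List ((ℕ × ℕ × ℕ) × ℝ)} {N : ℕ} (hpos : ∀ q ∈ L, 0 < q.2)
    (hdvd : ∀ t ∈ L.map Prod.fst, 3 ∣ t.1 + t.2.1 + 2 * t.2.2)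
    (heval : ∀ x₁ x₂ : ℝ,
      (L.map fun q => q.2 * x₁ ^ q.1.1 * x₂ ^ q.1.2.1 * (1 - x₁ - x₂) ^ q.1.2.2).sum = 1)
    (hcard : #(L.map Prod.fst).toFinset = N) : IsAdmissibleRank N :=
  ⟨ofTerms L, isAdmissible_ofTerms hpos hdvd heval, (card_support_ofTerms hpos).trans hcard⟩

theorem one : IsAdmissibleRank 1 :=
  of_terms (L := [((0, 0, 0), 1)]) (by simp) (by decide) (by simp) (by decide)

theorem add_six {N : ℕ} (h : IsAdmissibleRank N) : IsAdmissibleRank (N + 6) := by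
  obtain ⟨g, hg, rfl⟩ := h
  obtain ⟨m, hm, hc, hmax⟩ := hg.exists_max_degree
  refine ⟨graft g m (coeff m g) (ofTerms f32Terms), hg.graft isAdmissible_f32 hm hc.le le_rfl, ?_⟩
  have := card_support_graft_coeff hm hmax zero_notMem_support_f32
  rw [card_support_f32] at this
  omega

theorem add_seven {N : ℕ} (h : IsAdmissibleRank N) : IsAdmissibleRank (N + 7) := by
  obtain ⟨g, hg, rfl⟩ := h
  obtain ⟨m, hm, hc, hmax⟩ := hg.exists_max_degree
  refine ⟨graft g m (coeff m g / 2) (ofTerms f32Terms),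
    hg.graft isAdmissible_f32 hm (by positivity) (by linarith), ?_⟩
  rw [card_support_graft_of_ne hm hmax zero_notMem_support_f32 (by positivity) (by linarith),
    card_support_f32]

/- The examples of rank 16, 17, 18 are double grafts of `F` whose new supports overlap:
`F` with `x₁³` replaced by `x₁³ F`, and then `(3/2) x₁²x₂` replaced by `(3/2) x₁²x₂ F`,
resp. `3 x₁x₂²` by `3 x₁x₂² F`, resp. `x₂³` by `x₂³ F`. -/

theorem sixteen : IsAdmissibleRank 16 :=
  of_terms (L := [((0, 0, 3), 1), ((0, 1, 1), 3), ((0, 3, 0), 1), ((1, 0, 1), 3),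
      ((1, 2, 0), 3), ((2, 1, 0), 3 / 2), ((2, 1, 3), 3 / 2), ((2, 2, 1), 9 / 2),
      ((2, 4, 0), 3 / 2), ((3, 0, 3), 1), ((3, 1, 1), 15 / 2), ((3, 3, 0), 11 / 2),
      ((4, 0, 1), 3), ((4, 2, 0), 15 / 2), ((5, 1, 0), 9 / 2), ((6, 0, 0), 1)])
    (by norm_num) (by decide) (fun x₁ x₂ => by simp; ring) (by decide)

theorem seventeen : IsAdmissibleRank 17 :=
  of_terms (L := [((0, 0, 3), 1), ((0, 1, 1), 3), ((0, 3, 0), 1), ((1, 0, 1), 3),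
      ((1, 2, 3), 3), ((1, 3, 1), 9), ((1, 5, 0), 3), ((2, 1, 0), 3), ((2, 2, 1), 9),
      ((2, 4, 0), 9), ((3, 0, 3), 1), ((3, 1, 1), 3), ((3, 3, 0), 10), ((4, 0, 1), 3),
      ((4, 2, 0), 6), ((5, 1, 0), 3), ((6, 0, 0), 1)])
    (by norm_num) (by decide) (fun x₁ x₂ => by simp; ring) (by decide)

theorem eighteen : IsAdmissibleRank 18 :=
  of_terms (L := [((0, 0, 3), 1), ((0, 1, 1), 3), ((0, 3, 3), 1), ((0, 4, 1), 3),
      ((0, 6, 0), 1), ((1, 0, 1), 3), ((1, 2, 0), 3), ((1, 3, 1), 3), ((1, 5, 0), 3),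
      ((2, 1, 0), 3), ((2, 4, 0), 3), ((3, 0, 3), 1), ((3, 1, 1), 3), ((3, 3, 0), 2),
      ((4, 0, 1), 3), ((4, 2, 0), 3), ((5, 1, 0), 3), ((6, 0, 0), 1)])
    (by norm_num) (by decide) (fun x₁ x₂ => by simp; ring) (by decide)

theorem of_thirteen_le {N : ℕ} (hN : 13 ≤ N) : IsAdmissibleRank N := by
  induction N using Nat.strong_induction_on with
  | _ N ih =>
    by_cases h : 19 ≤ N
    · obtain ⟨k, rfl⟩ : ∃ k, N = k + 6 := ⟨N - 6, by omega⟩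
      exact (ih k (by omega) (by omega)).add_six
    · interval_cases N
      exacts [one.add_six.add_six, one.add_six.add_seven, one.add_seven.add_seven, sixteen,
        seventeen, eighteen]

end IsAdmissibleRank

/-- For every `N ≥ 13` there is a polynomial in three variables with non-negative
coefficients, equal to `1` on `x₁ + x₂ + x₃ = 1`, invariant under
`⟨ωI₂ ⊕ ω²I₁⟩` for `ω` a primitive cube root of unity (`3 ∣ a + b + 2c` on the
support), with support of cardinality exactly `N`. -/
theorem stmt_11 (N : ℕ) (hN : 13 ≤ N) :
    ∃ g : MvPolynomial (Fin 3) ℝ,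
      (∀ α, 0 ≤ g.coeff α) ∧
      (∀ x₁ x₂ x₃ : ℝ, x₁ + x₂ + x₃ = 1 → eval ![x₁, x₂, x₃] g = 1) ∧
      (∀ α ∈ g.support, 3 ∣ α 0 + α 1 + 2 * α 2) ∧
      g.support.card = N := by
  obtain ⟨g, hg, hcard⟩ := IsAdmissibleRank.of_thirteen_le hN
  exact ⟨g, hg.coeff_nonneg, hg.eval_eq_one, hg.three_dvd, hcard⟩
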